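/- arXiv:2010.14622 — 3 statements merged into one kernel-verified Lean document; each statement's English description precedes it below -/
import Mathlib

section
/- Let 𝒟 ⊆ ℝ^{n×n} be a nonempty compact convex set, C ∈ ℝ^{n×n} a fixed cost matrix, and for λ > 0 let D_λ be the unique minimizer over 𝒟 of D ↦ ⟨C, D⟩ + λ‖D‖_F². Let ξ* = min_{D∈𝒟} ⟨C,D⟩. Then any limit point D* of D_λ as λ → 0⁺ satisfies ⟨C, D*⟩ = ξ* and ‖D*‖_F ≤ ‖D‖_F for every D ∈ 𝒟 with ⟨C, D⟩ = ξ*; i.e., D_λ converges to the minimum-Frobenius-norm optimal solution of the linear program. -/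
open scoped RealInnerProductSpace

/-- As `λ → 0⁺`, any limit point of the minimizers `D_λ` of
`D ↦ ⟨C, D⟩ + λ‖D‖_F²` over a nonempty compact convex set `𝒟` is an optimal
solution of the linear program `min_{D ∈ 𝒟} ⟨C, D⟩` of minimum Frobenius
norm among all optimal solutions. -/
theorem stmt3 (n : ℕ) (𝒟 : Set (EuclideanSpace ℝ (Fin n × Fin n)))
    (hne : 𝒟.Nonempty) (hcomp : IsCompact 𝒟) (hconv : Convex ℝ 𝒟)
    (C : EuclideanSpace ℝ (Fin n × Fin n))
    (Dfun : ℝ → EuclideanSpace ℝ (Fin n × Fin n))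
    (hDfun : ∀ l : ℝ, 0 < l → Dfun l ∈ 𝒟 ∧
      ∀ D ∈ 𝒟, ⟪C, Dfun l⟫ + l * ‖Dfun l‖ ^ 2 ≤ ⟪C, D⟫ + l * ‖D‖ ^ 2)
    (ξ : ℝ) (hξ : IsLeast ((fun D => ⟪C, D⟫) '' 𝒟) ξ)
    (Dstar : EuclideanSpace ℝ (Fin n × Fin n))
    (hcluster : MapClusterPt Dstar (nhdsWithin 0 (Set.Ioi 0)) Dfun) :
    ⟪C, Dstar⟫ = ξ ∧ ∀ D ∈ 𝒟, ⟪C, D⟫ = ξ → ‖Dstar‖ ≤ ‖D‖ := by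
  obtain ⟨⟨D₀, hD₀mem, hD₀eq⟩, hlb⟩ := hξ
  -- key inequality: for l > 0, ‖Dfun l‖ ≤ ‖D‖ for any optimal D
  have key : ∀ D ∈ 𝒟, ⟪C, D⟫ = ξ → ∀ l : ℝ, 0 < l → ‖Dfun l‖ ≤ ‖D‖ := by
    intro D hD hDξ l hl
    obtain ⟨hmem, hmin⟩ := hDfun l hl
    have h1 : ξ ≤ ⟪C, Dfun l⟫ := hlb ⟨Dfun l, hmem, rfl⟩
    have h2 := hmin D hD
    rw [hDξ] at h2
    have h3 : l * ‖Dfun l‖ ^ 2 ≤ l * ‖D‖ ^ 2 := by nlinarith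
    have h4 : ‖Dfun l‖ ^ 2 ≤ ‖D‖ ^ 2 := le_of_mul_le_mul_left h3 hl
    nlinarith [norm_nonneg (Dfun l), norm_nonneg D]
  have hF : (nhdsWithin (0:ℝ) (Set.Ioi 0)).NeBot := nhdsGT_neBot 0
  constructor
  · -- ⟪C, Dstar⟫ = ξ
    have htend : Filter.Tendsto (fun l => ⟪C, Dfun l⟫) (nhdsWithin 0 (Set.Ioi 0)) (nhds ξ) := by
      have hub : Filter.Tendsto (fun l : ℝ => ξ + l * ‖D₀‖ ^ 2)
          (nhdsWithin 0 (Set.Ioi 0)) (nhds ξ) := by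
        have hc : Continuous (fun l : ℝ => ξ + l * ‖D₀‖ ^ 2) :=
          continuous_const.add (continuous_id.mul continuous_const)
        have := (hc.tendsto 0).mono_left (nhdsWithin_le_nhds (s := Set.Ioi 0))
        simpa using this
      refine tendsto_of_tendsto_of_tendsto_of_le_of_le' tendsto_const_nhds hub ?_ ?_
      · filter_upwards [self_mem_nhdsWithin] with l hl
        exact hlb ⟨Dfun l, (hDfun l hl).1, rfl⟩
      · filter_upwards [self_mem_nhdsWithin] with l hl
        obtain ⟨hmem, hmin⟩ := hDfun l hl
        have h2 := hmin D₀ hD₀mem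
        have hl' : (0:ℝ) < l := hl
        have : 0 ≤ l * ‖Dfun l‖ ^ 2 := by positivity
        simp only at hD₀eq
        nlinarith
    have hcl : MapClusterPt (⟪C, Dstar⟫) (nhdsWithin 0 (Set.Ioi 0))
        (fun l => ⟪C, Dfun l⟫) := by
      have hcont : ContinuousAt (fun x : EuclideanSpace ℝ (Fin n × Fin n) => ⟪C, x⟫) Dstar :=
        (continuous_const.inner continuous_id).continuousAt
      exact hcluster.clusterPt.map hcont (Filter.tendsto_map.comp Filter.tendsto_map)
        |>.mono (by rw [Filter.map_map]; exact le_refl _)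
    exact eq_of_nhds_neBot (hcl.clusterPt.mono htend)
  · intro D hD hDξ
    have hclosed : IsClosed {x : EuclideanSpace ℝ (Fin n × Fin n) | ‖x‖ ≤ ‖D‖} :=
      isClosed_le continuous_norm continuous_const
    have : Dstar ∈ closure {x : EuclideanSpace ℝ (Fin n × Fin n) | ‖x‖ ≤ ‖D‖} := by
      rw [mem_closure_iff_clusterPt]
      refine hcluster.clusterPt.mono ?_
      rw [Filter.le_principal_iff, Filter.mem_map]
      filter_upwards [self_mem_nhdsWithin] with l hl
      exact key D hD hDξ l hl
    rwa [hclosed.closure_eq] at this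
end

section
/- Let σ be a permutation of {1,…,n}, let the indices {1,…,n} be partitioned into K groups, and let c : {1,…,n}² → ℝ be a cost function satisfying: c(i,j') > c(i,j) whenever i and j belong to the same group and i and j' belong to different groups. Suppose σ maps some index to an index in a different group. Then there exists a permutation σ' that maps every index to an index within its own group with Σᵢ c(i, σ'(i)) < Σᵢ c(i, σ(i)). -/
/-!
Replace `σ` by its first-return map: send `i` to the first point after `i` on its `σ`-orbit
that lies in the group of `i`. This map is again a permutation, it respects the partition, it
agrees with `σ` wherever `σ` already stays inside the group, and at every other index it trades
an out-of-group target for an in-group one, which strictly lowers the cost.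
-/

namespace Equiv.Perm

variable {α β : Type*} [Finite α] (g : α → β) (σ : Perm α)

lemma exists_pos_pow_apply_label_eq (i : α) : ∃ k, 0 < k ∧ g ((σ ^ k) i) = g i :=
  ⟨orderOf σ, orderOf_pos σ, by rw [pow_orderOf_eq_one, one_apply]⟩

variable [DecidableEq β]

noncomputable def returnTime (i : α) : ℕ :=
  Nat.find (exists_pos_pow_apply_label_eq g σ i)

noncomputable def returnMap (i : α) : α :=
  (σ ^ returnTime g σ i) i

lemma returnTime_pos (i : α) : 0 < returnTime g σ i :=
  (Nat.find_spec (exists_pos_pow_apply_label_eq g σ i)).1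

lemma label_returnMap (i : α) : g (returnMap g σ i) = g i :=
  (Nat.find_spec (exists_pos_pow_apply_label_eq g σ i)).2

lemma label_pow_apply_ne_of_lt_returnTime {i : α} {k : ℕ} (hk : 0 < k)
    (hlt : k < returnTime g σ i) : g ((σ ^ k) i) ≠ g i :=
  fun h => Nat.find_min _ hlt ⟨hk, h⟩

lemma returnMap_eq_of_label_eq {i : α} (h : g (σ i) = g i) : returnMap g σ i = σ i := by
  have hle : returnTime g σ i ≤ 1 := Nat.find_min' _ ⟨one_pos, by rwa [pow_one]⟩
  rw [returnMap, le_antisymm hle (returnTime_pos g σ i), pow_one]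

lemma eq_of_returnMap_eq_of_returnTime_le {i j : α} (h : returnMap g σ i = returnMap g σ j)
    (hij : returnTime g σ i ≤ returnTime g σ j) : i = j := by
  set a := returnTime g σ i
  set b := returnTime g σ j
  have hji : (σ ^ (b - a)) j = i := by
    apply (σ ^ a).injective
    rw [← mul_apply, ← pow_add, Nat.add_sub_cancel' hij]
    exact h.symm
  rcases Nat.eq_zero_or_pos (b - a) with hzero | hpos
  · rw [hzero, pow_zero, one_apply] at hji
    exact hji.symm
  · -- `i` would be an earlier return of the orbit of `j` to its own fibre
    refine absurd ?_ (label_pow_apply_ne_of_lt_returnTime g σ hpos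
      (Nat.sub_lt (returnTime_pos g σ j) (returnTime_pos g σ i)))
    rw [hji, ← label_returnMap g σ i, h, label_returnMap g σ j]

lemma returnMap_injective : Function.Injective (returnMap g σ) := by
  intro i j h
  rcases le_total (returnTime g σ i) (returnTime g σ j) with hij | hji
  · exact eq_of_returnMap_eq_of_returnTime_le g σ h hij
  · exact (eq_of_returnMap_eq_of_returnTime_le g σ h.symm hji).symm

noncomputable def returnPerm : Perm α :=
  Equiv.ofBijective (returnMap g σ) (Finite.injective_iff_bijective.mp (returnMap_injective g σ))

lemma returnPerm_apply (i : α) : returnPerm g σ i = returnMap g σ i := rfl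

end Equiv.Perm

open Equiv.Perm in
/-- If the indices are partitioned into groups (via a group-labelling map `g`),
the cost satisfies `c i j < c i j'` whenever `j` is in the same group as `i` and
`j'` is not, and the permutation `σ` maps some index out of its group, then
there is a permutation `σ'` mapping every index within its own group with
strictly smaller total cost. -/
theorem stmt16 (n K : ℕ) (g : Fin n → Fin K) (c : Fin n → Fin n → ℝ)
    (σ : Equiv.Perm (Fin n))
    (hc : ∀ i j j', g j = g i → g j' ≠ g i → c i j < c i j')
    (hσ : ∃ i, g (σ i) ≠ g i) :
    ∃ σ' : Equiv.Perm (Fin n), (∀ i, g (σ' i) = g i) ∧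
      ∑ i, c i (σ' i) < ∑ i, c i (σ i) := by
  have hlt : ∀ i, g (σ i) ≠ g i → c i (returnPerm g σ i) < c i (σ i) :=
    fun i hi => hc i _ _ (label_returnMap g σ i) hi
  refine ⟨returnPerm g σ, label_returnMap g σ, Finset.sum_lt_sum (fun i _ => ?_) ?_⟩
  · by_cases hi : g (σ i) = g i
    · rw [returnPerm_apply, returnMap_eq_of_label_eq g σ hi]
    · exact (hlt i hi).le
  · obtain ⟨i, hi⟩ := hσ
    exact ⟨i, Finset.mem_univ i, hlt i hi⟩
end

section
/- Let U, U₁ ∈ ℝ^{n×d} each have orthonormal columns, let σ₁,…,σ_d be the singular values of UᵀU₁, and let W minimize ‖UᵀU₁ − O‖_F over orthogonal O ∈ 𝕆_d (so W = VV₁ᵀ from the SVD UᵀU₁ = VΛV₁ᵀ). Then ‖UᵀU₁ − W‖_F ≤ (min_{O ∈ 𝕆_d} ‖U₁ − UO‖_F)². -/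
open Matrix

/-- The Frobenius norm of a real matrix. -/
noncomputable def frobNorm {n m : ℕ} (M : Matrix (Fin n) (Fin m) ℝ) : ℝ :=
  Real.sqrt (∑ i, ∑ j, (M i j) ^ 2)

lemma frob_aux {n m : ℕ} (M : Matrix (Fin n) (Fin m) ℝ) :
    ∑ i, ∑ j, (M i j) ^ 2 = Matrix.trace (Mᵀ * M) := by
  simp [Matrix.trace, Matrix.mul_apply, Matrix.diag, sq]
  rw [Finset.sum_comm]

lemma frob_sq {n m : ℕ} (M : Matrix (Fin n) (Fin m) ℝ) :
    (frobNorm M) ^ 2 = Matrix.trace (Mᵀ * M) := by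
  rw [frobNorm, Real.sq_sqrt (by positivity), frob_aux]

/-- If `U, U₁` have orthonormal columns, `UᵀU₁ = V Λ V₁ᵀ` is an SVD, and
`W = V V₁ᵀ`, then `‖UᵀU₁ − W‖_F ≤ (min_{O ∈ 𝕆_d} ‖U₁ − UO‖_F)²`, i.e.
`‖UᵀU₁ − W‖_F ≤ ‖U₁ − UO‖_F²` for every orthogonal `O`. -/
theorem stmt19 (n d : ℕ) (U U₁ : Matrix (Fin n) (Fin d) ℝ)
    (hU : U.transpose * U = 1) (hU₁ : U₁.transpose * U₁ = 1)
    (V V₁ : Matrix (Fin d) (Fin d) ℝ) (σ : Fin d → ℝ)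
    (hV : V.transpose * V = 1) (hV₁ : V₁.transpose * V₁ = 1)
    (hσ : ∀ i, 0 ≤ σ i)
    (hsvd : U.transpose * U₁ = V * Matrix.diagonal σ * V₁.transpose) :
    ∀ O : Matrix (Fin d) (Fin d) ℝ, O.transpose * O = 1 →
      frobNorm (U.transpose * U₁ - V * V₁.transpose) ≤ (frobNorm (U₁ - U * O)) ^ 2 := by
  intro O hO
  have hUx : ∀ X : Matrix (Fin d) (Fin d) ℝ, Uᵀ * (U * X) = X := fun X => by
    rw [← Matrix.mul_assoc, hU, Matrix.one_mul]
  have hVx : ∀ X : Matrix (Fin d) (Fin d) ℝ, Vᵀ * (V * X) = X := fun X => by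
    rw [← Matrix.mul_assoc, hV, Matrix.one_mul]
  have hOOt : O * Oᵀ = 1 := mul_eq_one_comm.mp hO
  have hV₁V₁t : V₁ * V₁ᵀ = 1 := mul_eq_one_comm.mp hV₁
  -- step 1: σ i ≤ 1
  obtain ⟨N, hNdef⟩ : ∃ N, N = U₁ * V₁ := ⟨_, rfl⟩
  have hN : Nᵀ * N = 1 := by
    rw [hNdef, Matrix.transpose_mul, Matrix.mul_assoc, ← Matrix.mul_assoc U₁ᵀ, hU₁,
      Matrix.one_mul, hV₁]
  have hUN : Uᵀ * N = V * Matrix.diagonal σ := by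
    rw [hNdef, ← Matrix.mul_assoc, hsvd, Matrix.mul_assoc, hV₁, Matrix.mul_one]
  have hE : Nᵀ * (U * (Uᵀ * N)) = Matrix.diagonal (fun i => σ i ^ 2) := by
    calc Nᵀ * (U * (Uᵀ * N)) = (Uᵀ * N)ᵀ * (Uᵀ * N) := by
          rw [Matrix.transpose_mul, Matrix.transpose_transpose, Matrix.mul_assoc]
      _ = Matrix.diagonal σ * (Vᵀ * (V * Matrix.diagonal σ)) := by
          rw [hUN, Matrix.transpose_mul, Matrix.diagonal_transpose, Matrix.mul_assoc]
      _ = Matrix.diagonal (fun i => σ i ^ 2) := by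
          rw [hVx, Matrix.diagonal_mul_diagonal]
          exact congrArg Matrix.diagonal (funext fun i => (sq (σ i)).symm)
  have hσ1 : ∀ i, σ i ≤ 1 := by
    intro i
    obtain ⟨P, hPdef⟩ : ∃ P, P = N - U * (Uᵀ * N) := ⟨_, rfl⟩
    have hPP : Pᵀ * P = Nᵀ * N - Nᵀ * (U * (Uᵀ * N)) := by
      rw [hPdef]
      simp only [Matrix.transpose_sub, Matrix.transpose_mul, Matrix.transpose_transpose,
        Matrix.sub_mul, Matrix.mul_sub, Matrix.mul_assoc, hUx]
      abel
    have h0 : 0 ≤ (Pᵀ * P) i i := by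
      rw [Matrix.mul_apply]
      apply Finset.sum_nonneg
      intro j _
      simp only [Matrix.transpose_apply]
      exact mul_self_nonneg _
    rw [hPP, Matrix.sub_apply, hN, hE] at h0
    simp [Matrix.one_apply, Matrix.diagonal_apply_eq] at h0
    nlinarith [hσ i, h0, abs_le.mp h0]
  -- step 2: the trace of (U₁ - U O)ᵀ (U₁ - U O)
  have hExp : Matrix.trace ((U₁ - U * O)ᵀ * (U₁ - U * O))
      = 2 * d - 2 * Matrix.trace (Oᵀ * (Uᵀ * U₁)) := by
    have h1 : Matrix.trace (U₁ᵀ * (U * O)) = Matrix.trace (Oᵀ * (Uᵀ * U₁)) := by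
      rw [← Matrix.trace_transpose (U₁ᵀ * (U * O))]
      congr 1
      simp [Matrix.transpose_mul, Matrix.mul_assoc]
    have h2 : Matrix.trace ((U * O)ᵀ * U₁) = Matrix.trace (Oᵀ * (Uᵀ * U₁)) := by
      simp [Matrix.transpose_mul, Matrix.mul_assoc]
    have h3 : Matrix.trace ((U * O)ᵀ * (U * O)) = (d : ℝ) := by
      rw [Matrix.transpose_mul, Matrix.mul_assoc, hUx, hO]
      simp [Matrix.trace_one]
    have h4 : Matrix.trace (U₁ᵀ * U₁) = (d : ℝ) := by rw [hU₁]; simp [Matrix.trace_one]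
    simp only [Matrix.transpose_sub, Matrix.sub_mul, Matrix.mul_sub, Matrix.trace_sub]
    rw [h1, h2, h3, h4]
    ring
  -- step 3: trace (Oᵀ M) ≤ ∑ σ
  obtain ⟨Q, hQdef⟩ : ∃ Q, Q = V₁ᵀ * Oᵀ * V := ⟨_, rfl⟩
  have hQQ : Qᵀ * Q = 1 := by
    rw [hQdef]
    calc (V₁ᵀ * Oᵀ * V)ᵀ * (V₁ᵀ * Oᵀ * V)
        = Vᵀ * (O * (V₁ * (V₁ᵀ * (Oᵀ * V)))) := by
          simp [Matrix.transpose_mul, Matrix.mul_assoc]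
      _ = 1 := by
          rw [show V₁ * (V₁ᵀ * (Oᵀ * V)) = Oᵀ * V by
            rw [← Matrix.mul_assoc, hV₁V₁t, Matrix.one_mul]]
          rw [show O * (Oᵀ * V) = V by rw [← Matrix.mul_assoc, hOOt, Matrix.one_mul]]
          exact hV
  have hQ1 : ∀ i, Q i i ≤ 1 := by
    intro i
    have hs : (Qᵀ * Q) i i = ∑ j, Q j i ^ 2 := by
      rw [Matrix.mul_apply]
      simp [Matrix.transpose_apply, sq]
    have hle : Q i i ^ 2 ≤ ∑ j, Q j i ^ 2 :=
      Finset.single_le_sum (f := fun j => Q j i ^ 2) (fun j _ => by positivity)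
        (Finset.mem_univ i)
    rw [← hs, hQQ] at hle
    simp [Matrix.one_apply] at hle
    nlinarith [hle, abs_le.mp hle]
  have hTr : Matrix.trace (Oᵀ * (Uᵀ * U₁)) ≤ ∑ i, σ i := by
    have htr : Matrix.trace (Oᵀ * (Uᵀ * U₁)) = ∑ i, Q i i * σ i := by
      rw [hsvd]
      rw [show Oᵀ * (V * Matrix.diagonal σ * V₁ᵀ) = (Oᵀ * V * Matrix.diagonal σ) * V₁ᵀ by
        simp [Matrix.mul_assoc]]
      rw [Matrix.trace_mul_comm]
      rw [show V₁ᵀ * (Oᵀ * V * Matrix.diagonal σ) = Q * Matrix.diagonal σ by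
        rw [hQdef]; simp [Matrix.mul_assoc]]
      simp [Matrix.trace, Matrix.diag, Matrix.mul_diagonal]
    rw [htr]
    exact Finset.sum_le_sum fun i _ => mul_le_of_le_one_left (hσ i) (hQ1 i)
  -- step 4: frobNorm of (M - W)
  obtain ⟨A, hAdef⟩ : ∃ A, A = Matrix.diagonal (fun i => σ i - 1) := ⟨_, rfl⟩
  have hMW : Uᵀ * U₁ - V * V₁ᵀ = V * A * V₁ᵀ := by
    rw [hsvd, hAdef, show Matrix.diagonal (fun i => σ i - 1) = Matrix.diagonal σ - 1 by
      rw [← Matrix.diagonal_one, ← Matrix.diagonal_sub]]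
    rw [Matrix.mul_sub, Matrix.sub_mul, Matrix.mul_one]
  have hTrMW : Matrix.trace ((Uᵀ * U₁ - V * V₁ᵀ)ᵀ * (Uᵀ * U₁ - V * V₁ᵀ))
      = ∑ i, (σ i - 1) ^ 2 := by
    rw [hMW]
    have e1 : (V * A * V₁ᵀ)ᵀ * (V * A * V₁ᵀ) = V₁ * (Aᵀ * (A * V₁ᵀ)) := by
      simp only [Matrix.transpose_mul, Matrix.transpose_transpose, Matrix.mul_assoc]
      rw [show Vᵀ * (V * (A * V₁ᵀ)) = A * V₁ᵀ from hVx _]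
    rw [e1, Matrix.trace_mul_comm]
    rw [show Aᵀ * (A * V₁ᵀ) * V₁ = Aᵀ * A * (V₁ᵀ * V₁) by simp [Matrix.mul_assoc]]
    rw [hV₁, Matrix.mul_one, hAdef, Matrix.diagonal_transpose, Matrix.diagonal_mul_diagonal]
    simp [Matrix.trace, Matrix.diag, sq]
  -- assembly
  have hSnn : 0 ≤ ∑ i, (1 - σ i) := Finset.sum_nonneg fun i _ => by linarith [hσ1 i]
  have hfrob : frobNorm (Uᵀ * U₁ - V * V₁ᵀ) ≤ ∑ i, (1 - σ i) := by
    rw [frobNorm, frob_aux, hTrMW]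
    have h1 : ∑ i, (σ i - 1) ^ 2 = ∑ i, (1 - σ i) ^ 2 :=
      Finset.sum_congr rfl fun i _ => by ring
    rw [h1]
    calc Real.sqrt (∑ i, (1 - σ i) ^ 2) ≤ Real.sqrt ((∑ i, (1 - σ i)) ^ 2) :=
          Real.sqrt_le_sqrt
            (Finset.sum_sq_le_sq_sum_of_nonneg fun i _ => by linarith [hσ1 i])
      _ = ∑ i, (1 - σ i) := Real.sqrt_sq hSnn
  have hfinal : (frobNorm (U₁ - U * O)) ^ 2 = 2 * d - 2 * Matrix.trace (Oᵀ * (Uᵀ * U₁)) := by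
    rw [frob_sq, hExp]
  have hSd : ∑ i, (1 - σ i) = d - ∑ i, σ i := by
    rw [Finset.sum_sub_distrib]
    simp
  rw [hfinal]
  linarith [hTr, hSnn, hfrob, hSd]
end
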